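/- arXiv:2006.10617 — 6 statements merged into one kernel-verified Lean document; each statement's English description precedes it below -/
import Mathlib

section
/- Let X be a nonempty compact connected metric space such that every point of X has an open neighborhood homeomorphic to C × ℝ, where C = ℕ → Bool is the Cantor space. If some path component of X is dense in X, then the set {x ∈ X : the path component of x is dense in X} is comeagre (residual) in X; in particular it is dense. -/
/-!
Call a set path-saturated if it is a union of path components. In a chart `W ≃ₜ C × L` with `C`
totally disconnected and `L` path connected, a plaque `{c} × L` lies in one path component, and
a path crossing the chart keeps its `C`-coordinate. Hence the interior of a path-saturated set is
again path-saturated, so the path-saturation of every open set is open. Given a countable basis,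
the points whose path component meets every basic open set form a countable intersection of
such saturations, each of which is dense because it contains the dense path component.
-/

open Set Topology

section Charts

variable {X C L : Type*} [TopologicalSpace X] [TopologicalSpace C] [TopologicalSpace L]

theorem joined_of_chart_fst_eq [PathConnectedSpace L] {W : Set X} (h : W ≃ₜ C × L) {p q : W}
    (hpq : (h p).1 = (h q).1) : Joined (p : X) q := by
  have hjoined : Joined (h p) (h q) := by
    rw [← Prod.mk.eta (p := h p), ← Prod.mk.eta (p := h q), hpq]
    exact (Joined.refl _).prod (PathConnectedSpace.joined _ _)
  simpa using (hjoined.map h.symm.continuous).map continuous_subtype_val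

theorem mem_interior_of_chart_fst_eq [PathConnectedSpace L] {A : Set X}
    (hA : ∀ x ∈ A, pathComponent x ⊆ A) {W : Set X} (hW : IsOpen W) (h : W ≃ₜ C × L) {p q : W}
    (hpq : (h p).1 = (h q).1) (hp : (p : X) ∈ interior A) : (q : X) ∈ interior A := by
  set V : Set X := (↑) '' (h ⁻¹' ((Prod.fst '' (h '' ((↑) ⁻¹' interior A))) ×ˢ univ))
  have hV : IsOpen V := hW.isOpenMap_subtype_val _ <|
    ((isOpenMap_fst _ (h.isOpenMap _ (isOpen_interior.preimage continuous_subtype_val))).prod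
      isOpen_univ).preimage h.continuous
  have hVA : V ⊆ A := by
    rintro _ ⟨w, ⟨⟨_, ⟨o, ho, rfl⟩, how⟩, -⟩, rfl⟩
    exact hA _ (interior_subset ho) (joined_of_chart_fst_eq h how)
  exact interior_maximal hVA hV ⟨q, ⟨⟨h p, ⟨p, hp, rfl⟩, hpq⟩, mem_univ _⟩, rfl⟩

variable [TotallyDisconnectedSpace C] [PathConnectedSpace L]
  (hloc : ∀ x : X, ∃ W : Set X, x ∈ W ∧ IsOpen W ∧ Nonempty (W ≃ₜ C × L))
include hloc

theorem isLocallyConstant_mem_interior_comp {A : Set X} (hA : ∀ x ∈ A, pathComponent x ⊆ A)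
    {Y : Type*} [TopologicalSpace Y] [LocallyConnectedSpace Y] {f : Y → X} (hf : Continuous f) :
    IsLocallyConstant fun t ↦ f t ∈ interior A := by
  refine (IsLocallyConstant.iff_eventually_eq _).2 fun t ↦ ?_
  obtain ⟨W, htW, hW, ⟨h⟩⟩ := hloc (f t)
  set N := connectedComponentIn (f ⁻¹' W) t
  have hNW : N ⊆ f ⁻¹' W := connectedComponentIn_subset _ _
  have hN : N ∈ 𝓝 t := connectedComponentIn_mem_nhds (hf.continuousAt.preimage_mem_nhds
    (hW.mem_nhds htW))
  let φ : N → W := fun s ↦ ⟨f s, hNW s.2⟩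
  have hφ : Continuous φ := (hf.comp continuous_subtype_val).subtype_mk _
  have : PreconnectedSpace N :=
    Subtype.preconnectedSpace (isPreconnected_connectedComponentIn (F := f ⁻¹' W))
  -- a preconnected set in `C` is a singleton, so `φ` stays in one plaque
  have hplaque : (range fun s ↦ (h (φ s)).1).Subsingleton :=
    (isPreconnected_range (continuous_fst.comp (h.continuous.comp hφ))).subsingleton
  filter_upwards [hN] with s hs
  have hst := hplaque (mem_range_self ⟨s, hs⟩) (mem_range_self ⟨t, mem_connectedComponentIn htW⟩)
  exact propext ⟨mem_interior_of_chart_fst_eq hA hW h hst,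
    mem_interior_of_chart_fst_eq hA hW h hst.symm⟩

theorem pathComponent_subset_interior {A : Set X} (hA : ∀ x ∈ A, pathComponent x ⊆ A) {x : X}
    (hx : x ∈ interior A) : pathComponent x ⊆ interior A := by
  intro y hxy
  have hconst := (isLocallyConstant_mem_interior_comp hloc hA
    hxy.somePath.continuous_extend).apply_eq_of_preconnectedSpace 0 1
  simp only [Path.extend_zero, Path.extend_one] at hconst
  exact hconst ▸ hx

theorem isOpen_biUnion_pathComponent {U : Set X} (hU : IsOpen U) :
    IsOpen (⋃ x ∈ U, pathComponent x) := by
  set S := ⋃ x ∈ U, pathComponent x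
  have hS : ∀ z ∈ S, pathComponent z ⊆ S := by
    intro z hz
    obtain ⟨x, hxU, hzx⟩ := mem_iUnion₂.1 hz
    rw [pathComponent_congr hzx]
    exact subset_biUnion_of_mem hxU
  have hUS : U ⊆ interior S :=
    interior_maximal (fun x hx ↦ mem_biUnion hx (mem_pathComponent_self x)) hU
  refine subset_interior_iff_isOpen.1 fun z hz ↦ ?_
  obtain ⟨x, hxU, hxz⟩ := mem_iUnion₂.1 hz
  exact pathComponent_subset_interior hloc hS (hUS hxU) hxz

end Charts

theorem setOf_dense_pathComponent_mem_residual {X : Type*} [TopologicalSpace X]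
    [SecondCountableTopology X]
    (hsat : ∀ U : Set X, IsOpen U → IsOpen (⋃ x ∈ U, pathComponent x)) {x₀ : X}
    (hx₀ : Dense (pathComponent x₀)) : {x : X | Dense (pathComponent x)} ∈ residual X := by
  obtain ⟨B, hBc, -, hB⟩ := TopologicalSpace.exists_countable_basis X
  have hdense : ∀ U ∈ {U ∈ B | U.Nonempty}, Dense (⋃ x ∈ U, pathComponent x) := by
    rintro U ⟨hUB, hU⟩
    obtain ⟨y, hyU, hy⟩ := hx₀.inter_open_nonempty U (hB.isOpen hUB) hU
    refine hx₀.mono fun z hz ↦ mem_biUnion hyU ?_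
    rwa [pathComponent_congr hy]
  refine Filter.mem_of_superset ((countable_bInter_mem (hBc.mono (sep_subset _ _))).2
    fun U hU ↦ residual_of_dense_open (hsat U (hB.isOpen hU.1)) (hdense U hU)) ?_
  intro x hx
  refine hB.dense_iff.2 fun U hUB hU ↦ ?_
  obtain ⟨y, hyU, hxy⟩ := mem_iUnion₂.1 (mem_iInter₂.1 hx U ⟨hUB, hU⟩)
  exact ⟨y, hyU, mem_pathComponent_of_mem hxy⟩

theorem residual_dense_leaves_of_locally_cantor_times_interval_general
    {X : Type*} [MetricSpace X] [CompactSpace X]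
    (hloc : ∀ x : X, ∃ U : Set X, x ∈ U ∧ IsOpen U ∧
      Nonempty (U ≃ₜ ((ℕ → Bool) × ℝ)))
    (hdense : ∃ x : X, Dense (pathComponent x)) :
    {x : X | Dense (pathComponent x)} ∈ residual X ∧
      Dense {x : X | Dense (pathComponent x)} := by
  obtain ⟨x₀, hx₀⟩ := hdense
  have hres := setOf_dense_pathComponent_mem_residual
    (fun _ ↦ isOpen_biUnion_pathComponent hloc) hx₀
  exact ⟨hres, dense_of_mem_residual hres⟩

/-- If a nonempty compact connected metric space `X` is locally the
product of a Cantor set and an interval, and some path component (leaf) of `X`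
is dense, then the set of points whose path component is dense is residual
(comeagre) in `X`; in particular it is dense. -/
theorem residual_dense_leaves_of_locally_cantor_times_interval
    {X : Type*} [MetricSpace X] [CompactSpace X] [ConnectedSpace X] [Nonempty X]
    (hloc : ∀ x : X, ∃ U : Set X, x ∈ U ∧ IsOpen U ∧
      Nonempty (U ≃ₜ ((ℕ → Bool) × ℝ)))
    (hdense : ∃ x : X, Dense (pathComponent x)) :
    {x : X | Dense (pathComponent x)} ∈ residual X ∧
      Dense {x : X | Dense (pathComponent x)} :=
  residual_dense_leaves_of_locally_cantor_times_interval_general hloc hdense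
end

section
/- Let X be a continuum (a nonempty compact connected Hausdorff space) and let K be a proper subcontinuum of X (a nonempty compact connected subset with K ≠ X). If X \ K is disconnected, then X is decomposable. -/
/-!
Separate `X \ K` by open sets `u`, `v` (disjoint on `X \ K`). Then `K ∪ u` is the complement
of the open set `v \ K`, hence closed, and it is connected: a clopen piece of `K ∪ u` missing `K`
lies in `u \ K`, so it is clopen in `X` and therefore empty. Thus `K ∪ u` and `K ∪ v` are two
proper subcontinua covering `X`.
-/

open Set

theorem compl_union_eq_of_separation {α : Type*} {K u v : Set α} (hcov : Kᶜ ⊆ u ∪ v)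
    (hdisj : Kᶜ ∩ (u ∩ v) = ∅) : (K ∪ u)ᶜ = Kᶜ ∩ v := by
  ext x
  have := @hcov x
  have : x ∉ Kᶜ ∩ (u ∩ v) := hdisj ▸ notMem_empty x
  simp only [mem_compl_iff, mem_union, mem_inter_iff] at *
  tauto

section

variable {X : Type*} [TopologicalSpace X]

def IsProperSubcontinuum (A : Set X) : Prop :=
  IsCompact A ∧ IsConnected A ∧ A ≠ univ

theorem IsConnected.union_isOpen_of_isClosed [ConnectedSpace X] {K U : Set X}
    (hK : IsConnected K) (hU : IsOpen U) (hC : IsClosed (K ∪ U)) : IsConnected (K ∪ U) := by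
  refine ⟨hK.nonempty.mono subset_union_left, ?_⟩
  rw [isPreconnected_iff_subset_of_fully_disjoint_closed hC]
  suffices key : ∀ u v, IsClosed u → IsClosed v → K ∪ U ⊆ u ∪ v → Disjoint u v → K ⊆ u →
      K ∪ U ⊆ u by
    intro u v hu hv hcov huv
    have hKuv : K ∩ (u ∩ v) = ∅ := by simp [huv.inter_eq]
    rcases isPreconnected_iff_subset_of_disjoint_closed.mp hK.isPreconnected u v hu hv
      (subset_union_left.trans hcov) hKuv with hKu | hKv
    · exact Or.inl (key u v hu hv hcov huv hKu)
    · exact Or.inr (key v u hv hu (union_comm u v ▸ hcov) huv.symm hKv)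
  intro u v hu hv hcov huv hKu
  have hpiece : (K ∪ U) ∩ v = U \ u := by
    ext x
    have := @hcov x
    have := @hKu x
    have := huv.notMem_of_mem_right (a := x)
    simp only [mem_inter_iff, mem_union, mem_sdiff] at *
    tauto
  have hclopen : IsClopen ((K ∪ U) ∩ v) := ⟨hC.inter hv, hpiece ▸ hU.sdiff hu⟩
  rcases isClopen_iff.mp hclopen with hempty | huniv
  · intro x hx
    refine (hcov hx).resolve_right fun hxv => ?_
    exact (hempty ▸ mem_inter hx hxv : x ∈ (∅ : Set X))
  · obtain ⟨k, hk⟩ := hK.nonempty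
    exact absurd (hKu hk) (huv.notMem_of_mem_right (huniv ▸ mem_univ k : k ∈ (K ∪ U) ∩ v).2)

theorem isProperSubcontinuum_union_of_separation [CompactSpace X] [ConnectedSpace X]
    {K u v : Set X} (hK : IsConnected K) (hKc : IsClosed K) (hu : IsOpen u) (hv : IsOpen v)
    (hcov : Kᶜ ⊆ u ∪ v) (hdisj : Kᶜ ∩ (u ∩ v) = ∅) (hv0 : (Kᶜ ∩ v).Nonempty) :
    IsProperSubcontinuum (K ∪ u) := by
  have hcompl := compl_union_eq_of_separation hcov hdisj
  have hclosed : IsClosed (K ∪ u) := by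
    rw [← isOpen_compl_iff, hcompl]
    exact hKc.isOpen_compl.inter hv
  refine ⟨hclosed.isCompact, hK.union_isOpen_of_isClosed hu hclosed, fun huniv => ?_⟩
  rw [huniv, compl_univ] at hcompl
  exact hv0.ne_empty hcompl.symm

end

theorem decomposable_of_complement_of_subcontinuum_disconnected_general
    {X : Type*} [TopologicalSpace X] [T2Space X] [CompactSpace X]
    [ConnectedSpace X]
    (K : Set X) (hKcomp : IsCompact K) (hKconn : IsConnected K)
    (hKproper : K ≠ Set.univ)
    (hdisc : ¬ IsConnected (Set.univ \ K)) :
    ∃ A B : Set X,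
      IsCompact A ∧ IsConnected A ∧ A ≠ Set.univ ∧
      IsCompact B ∧ IsConnected B ∧ B ≠ Set.univ ∧
      A ∪ B = Set.univ := by
  have hKc : IsClosed K := hKcomp.isClosed
  have hsep : ¬ IsPreconnected Kᶜ := fun h =>
    hdisc ⟨by rwa [← compl_eq_univ_sdiff, nonempty_compl], by rwa [← compl_eq_univ_sdiff]⟩
  simp only [IsPreconnected, not_forall, exists_prop] at hsep
  obtain ⟨u, v, hu, hv, hcov, hu0, hv0, hdisj⟩ := hsep
  obtain ⟨hAc, hAconn, hAne⟩ := isProperSubcontinuum_union_of_separation hKconn hKc hu hv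
    hcov (not_nonempty_iff_eq_empty.mp hdisj) hv0
  obtain ⟨hBc, hBconn, hBne⟩ := isProperSubcontinuum_union_of_separation hKconn hKc hv hu
    (union_comm u v ▸ hcov) (inter_comm u v ▸ not_nonempty_iff_eq_empty.mp hdisj) hu0
  refine ⟨K ∪ u, K ∪ v, hAc, hAconn, hAne, hBc, hBconn, hBne, ?_⟩
  rw [← union_union_distrib_left]
  exact compl_subset_iff_union.mp hcov

/-- Let `X` be a continuum (nonempty compact connected Hausdorff
space) and `K` a proper subcontinuum. If `X \ K` is disconnected then `X` is
decomposable (the union of two proper subcontinua). -/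
theorem decomposable_of_complement_of_subcontinuum_disconnected
    {X : Type*} [TopologicalSpace X] [T2Space X] [CompactSpace X]
    [ConnectedSpace X] [Nonempty X]
    (K : Set X) (hKcomp : IsCompact K) (hKconn : IsConnected K)
    (hKproper : K ≠ Set.univ)
    (hdisc : ¬ IsConnected (Set.univ \ K)) :
    ∃ A B : Set X,
      IsCompact A ∧ IsConnected A ∧ A ≠ Set.univ ∧
      IsCompact B ∧ IsConnected B ∧ B ≠ Set.univ ∧
      A ∪ B = Set.univ :=
  decomposable_of_complement_of_subcontinuum_disconnected_general K hKcomp hKconn hKproper hdisc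
end

section
/- Let X be a continuum (a nonempty compact connected Hausdorff space) with more than one point. Then for every point p ∈ X, the composant of p, i.e. the union of all proper subcontinua of X containing p, is dense in X. -/
/-!
Boundary bumping: if `U` is a proper open subset of a continuum and `p ∈ closure U`, the
component `K` of `p` in `closure U` reaches `Uᶜ`. Otherwise, since components of a compact
Hausdorff space are quasi-components, some relatively clopen subset of `closure U` contains `K`
and lies inside `U`; being open in `U` and closed in `closure U`, it is clopen in the whole
continuum, hence everything.

For the density of the composant of `p`, take a nonempty open `W ∌ p`, a closed neighbourhood
`N ⊆ W` of some point `x ∈ W`, and `U = Nᶜ`. The component of `p` in `closure U` is a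
subcontinuum missing `x`, and by boundary bumping it meets `N ⊆ W`.
-/

open Set

theorem IsClosed.isClosed_connectedComponentIn {X : Type*} [TopologicalSpace X] {F : Set X}
    (hF : IsClosed F) (x : X) : IsClosed (connectedComponentIn F x) := by
  by_cases hx : x ∈ F
  · refine isClosed_of_closure_subset <|
      isPreconnected_connectedComponentIn.closure.subset_connectedComponentIn
        (subset_closure (mem_connectedComponentIn hx)) ?_
    exact closure_minimal (connectedComponentIn_subset F x) hF
  · simp [connectedComponentIn_eq_empty hx]

theorem exists_isClopen_mem_disjoint_of_disjoint_connectedComponent {X : Type*}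
    [TopologicalSpace X] [T2Space X] [CompactSpace X] {x : X} {Z : Set X} (hZ : IsClosed Z)
    (hd : Disjoint (connectedComponent x) Z) : ∃ F, IsClopen F ∧ x ∈ F ∧ Disjoint F Z := by
  rw [connectedComponent_eq_iInter_isClopen, disjoint_iff_inter_eq_empty, inter_comm] at hd
  obtain ⟨t, ht⟩ := hZ.isCompact.elim_finite_subfamily_closed
    (fun s : {s : Set X // IsClopen s ∧ x ∈ s} ↦ (s : Set X)) (fun s ↦ s.2.1.1) hd
  refine ⟨⋂ s ∈ t, (s : Set X), isClopen_biInter_finset fun s _ ↦ s.2.1,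
    mem_iInter₂.2 fun s _ ↦ s.2.2, ?_⟩
  rwa [disjoint_iff_inter_eq_empty, inter_comm]

theorem connectedComponentIn_closure_inter_compl_nonempty {X : Type*} [TopologicalSpace X]
    [T2Space X] [CompactSpace X] [PreconnectedSpace X] {U : Set X} (hU : IsOpen U)
    (hU_ne : U ≠ univ) {p : X} (hp : p ∈ closure U) :
    (connectedComponentIn (closure U) p ∩ Uᶜ).Nonempty := by
  by_contra hKU
  rw [not_nonempty_iff_eq_empty, ← disjoint_iff_inter_eq_empty,
    connectedComponentIn_eq_image hp] at hKU
  have : CompactSpace (closure U) := isCompact_iff_compactSpace.1 isClosed_closure.isCompact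
  obtain ⟨F, hF, hpF, hF_disj⟩ := exists_isClopen_mem_disjoint_of_disjoint_connectedComponent
    (hU.isClosed_compl.preimage continuous_subtype_val)
    ((hKU.preimage _).mono_left (subset_preimage_image _ _))
  have hF_sub : Subtype.val '' F ⊆ U := by
    rintro _ ⟨z, hz, rfl⟩
    by_contra hzU
    exact hF_disj.notMem_of_mem_left hz hzU
  have hF_open : IsOpen (Subtype.val '' F) := by
    obtain ⟨O, hO, rfl⟩ := isOpen_induced_iff.1 hF.2
    rw [image_preimage_eq_inter_range, Subtype.range_coe] at hF_sub ⊢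
    convert hO.inter hU using 1
    exact Subset.antisymm (subset_inter inter_subset_left hF_sub)
      (inter_subset_inter_right O subset_closure)
  have hF_clopen : IsClopen (Subtype.val '' F) :=
    ⟨(hF.1.isCompact.image continuous_subtype_val).isClosed, hF_open⟩
  exact hU_ne <| eq_univ_of_univ_subset <|
    (hF_clopen.eq_univ ⟨p, _, hpF, rfl⟩).symm.subset.trans hF_sub

/-- In a continuum `X` (nonempty compact connected Hausdorff space)
with more than one point, the composant of every point `p` (the union of all
proper subcontinua containing `p`) is dense in `X`. -/
theorem composant_dense
    {X : Type*} [TopologicalSpace X] [T2Space X] [CompactSpace X]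
    [ConnectedSpace X] [Nontrivial X] (p : X) :
    Dense (⋃₀ {K : Set X | IsCompact K ∧ IsConnected K ∧ K ≠ Set.univ ∧ p ∈ K}) := by
  rw [dense_iff_inter_open]
  rintro W hW ⟨x, hxW⟩
  by_cases hpW : p ∈ W
  · exact ⟨p, hpW, {p},
      ⟨isCompact_singleton, isConnected_singleton, singleton_ne_univ p, rfl⟩, rfl⟩
  obtain ⟨N, hN, hN_closed, hNW⟩ := exists_mem_nhds_isClosed_subset (hW.mem_nhds hxW)
  have hx : x ∉ closure Nᶜ := by
    rw [closure_compl, notMem_compl_iff]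
    exact mem_interior_iff_mem_nhds.2 hN
  have hp : p ∈ closure Nᶜ := subset_closure fun hpN ↦ hpW (hNW hpN)
  set K := connectedComponentIn (closure Nᶜ) p
  have hN_ne : Nᶜ ≠ univ :=
    (ne_univ_iff_exists_notMem _).2 ⟨x, fun hxN ↦ hx (subset_closure hxN)⟩
  obtain ⟨q, hqK, hqN⟩ :=
    connectedComponentIn_closure_inter_compl_nonempty hN_closed.isOpen_compl hN_ne hp
  have hK_ne : K ≠ univ := (ne_univ_iff_exists_notMem _).2
    ⟨x, fun hxK ↦ hx (connectedComponentIn_subset _ _ hxK)⟩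
  refine ⟨q, hNW (not_not.1 hqN), K, ⟨?_, isConnected_connectedComponentIn_iff.2 hp, hK_ne,
    mem_connectedComponentIn hp⟩, hqK⟩
  exact (isClosed_closure.isClosed_connectedComponentIn p).isCompact
end

section
/- Let f : Q → Q be a Lattès map with lift f̃ : 𝕋² → 𝕋², a covering map each of whose fibers has exactly d elements, with d > 1. Then the critical values of f are contained in π(T): for every q ∈ Q with q ∉ π(T), the fiber f⁻¹(q) has at least d elements (so q is not a critical value of f). -/
/-!
Write `q = π z`. Since `q ∉ π(T)`, the points `z` and `-z` are distinct, so `f̃⁻¹{z, -z}` has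
exactly `2d` points. The semiconjugacy `π ∘ f̃ = f ∘ π` sends all of them into `f⁻¹{q}`, and `π`
is at most two-to-one, so `f⁻¹{q}` contains at least `d` points.
-/

/-- The 2-torus `𝕋² = (ℝ/ℤ) × (ℝ/ℤ)`. -/
abbrev Torus : Type := UnitAddCircle × UnitAddCircle

/-- The equivalence relation `x ∼ -x` on the torus. -/
def negSetoid : Setoid Torus where
  r x y := x = y ∨ x = -y
  iseqv := by
    refine ⟨fun x => Or.inl rfl, fun {x y} h => ?_, fun {x y z} h1 h2 => ?_⟩
    · rcases h with h | h
      · exact Or.inl h.symm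
      · right; rw [h, neg_neg]
    · rcases h1 with h1 | h1 <;> rcases h2 with h2 | h2 <;>
        simp only [h1, h2, neg_neg] <;> tauto

/-- The quotient `Q` of the torus by `x ∼ -x` (topologically a sphere). -/
abbrev Q : Type := Quotient negSetoid

/-- The quotient (branched covering) map `π : 𝕋² → Q`. -/
def piQ : Torus → Q := Quotient.mk negSetoid

/-- The set of 2-torsion points of the torus (the four branch points of `π`,
whose images under `π` are the critical values of `π`). -/
def torsion2 : Set Torus := {z : Torus | z + z = 0}

open Set

theorem Set.ncard_preimage_eq_mul {α β : Type*} {g : α → β} {d : ℕ} (hd : d ≠ 0) {t : Set β}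
    (ht : t.Finite) (hfib : ∀ b ∈ t, (g ⁻¹' {b}).ncard = d) :
    (g ⁻¹' t).ncard = d * t.ncard := by
  induction t, ht using Set.Finite.induction_on with
  | empty => simp
  | @insert a s ha hs ih =>
    have hfin : ∀ b ∈ insert a s, (g ⁻¹' {b}).Finite := fun b hb =>
      finite_of_ncard_ne_zero (by rw [hfib b hb]; exact hd)
    have hdisj : Disjoint (g ⁻¹' {a}) (g ⁻¹' s) :=
      Disjoint.preimage g (disjoint_singleton_left.mpr ha)
    rw [insert_eq, preimage_union, ncard_union_eq hdisj (hfin a (mem_insert a s))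
      (hs.preimage' fun b hb => hfin b (mem_insert_of_mem a hb)), hfib a (mem_insert a s),
      ih fun b hb => hfib b (mem_insert_of_mem a hb), ← insert_eq, ncard_insert_of_notMem ha hs]
    ring

theorem piQ_surjective : Function.Surjective piQ :=
  Quotient.mk_surjective

theorem piQ_eq_piQ_iff {x y : Torus} : piQ x = piQ y ↔ x = y ∨ x = -y :=
  Quotient.eq (r := negSetoid)

theorem piQ_neg (z : Torus) : piQ (-z) = piQ z :=
  piQ_eq_piQ_iff.mpr (Or.inr rfl)

theorem preimage_piQ_singleton (x : Torus) : piQ ⁻¹' {piQ x} = {x, -x} := by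
  ext y
  simp [piQ_eq_piQ_iff]

theorem neg_ne_self_of_piQ_notMem (z : Torus) (hz : piQ z ∉ piQ '' torsion2) : -z ≠ z := by
  intro h
  exact hz ⟨z, show z + z = 0 from neg_eq_iff_add_eq_zero.mp h, rfl⟩

theorem ncard_le_two_mul_ncard_image_piQ (s : Set Torus) : s.ncard ≤ 2 * (piQ '' s).ncard := by
  classical
  rcases s.finite_or_infinite with hs | hs
  · obtain ⟨s, rfl⟩ := hs.exists_finset_coe
    rw [← Finset.coe_image, ncard_coe_finset, ncard_coe_finset]
    refine Finset.card_le_mul_card_image s 2 fun q _ => ?_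
    obtain ⟨x, rfl⟩ := piQ_surjective q
    rw [← ncard_coe_finset, Finset.coe_filter]
    calc {y ∈ (s : Set Torus) | piQ y = piQ x}.ncard ≤ ({x, -x} : Set Torus).ncard :=
          ncard_le_ncard (fun y hy => preimage_piQ_singleton x ▸ hy.2) (toFinite _)
      _ ≤ 2 := (ncard_insert_le x {-x}).trans (by rw [ncard_singleton])
  · simp [hs.ncard]

theorem image_piQ_preimage_pair_subset {f : Q → Q} {ftilde : Torus → Torus}
    (hsemi : ∀ z : Torus, piQ (ftilde z) = f (piQ z)) (z : Torus) :
    piQ '' (ftilde ⁻¹' {z, -z}) ⊆ f ⁻¹' {piQ z} := by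
  rintro _ ⟨x, hx, rfl⟩
  simp only [mem_preimage, mem_insert_iff, mem_singleton_iff] at hx
  rcases hx with hx | hx <;> simp [← hsemi, hx, piQ_neg]

theorem lattes_critical_values_subset_branch_values_general
    (f : Q → Q)
    (ftilde : Torus → Torus)
    (d : ℕ) (hd : 1 < d)
    (hfib : ∀ z : Torus, (ftilde ⁻¹' {z}).ncard = d)
    (hsemi : ∀ z : Torus, piQ (ftilde z) = f (piQ z))
    (q : Q) (hq : q ∉ piQ '' torsion2) :
    ∃ s : Finset Q, (↑s : Set Q) ⊆ f ⁻¹' {q} ∧ s.card = d := by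
  obtain ⟨z, rfl⟩ := piQ_surjective q
  set S := ftilde ⁻¹' {z, -z}
  have hS : S.ncard = 2 * d := by
    rw [ncard_preimage_eq_mul (by omega) (toFinite _) fun b _ => hfib b,
      ncard_pair (neg_ne_self_of_piQ_notMem z hq).symm, mul_comm]
  have hSfin : S.Finite := finite_of_ncard_ne_zero (by omega)
  obtain ⟨t, htS, htd⟩ := exists_subset_card_eq (s := piQ '' S) (n := d)
    (by linarith [ncard_le_two_mul_ncard_image_piQ S])
  have htfin : t.Finite := (hSfin.image piQ).subset htS
  refine ⟨htfin.toFinset, ?_, ?_⟩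
  · simpa only [Finite.coe_toFinset] using htS.trans (image_piQ_preimage_pair_subset hsemi z)
  · rw [← htd, ncard_eq_toFinset_card t htfin]

/-- For a Lattès map `f : Q → Q` with lift a covering map
`f̃ : 𝕋² → 𝕋²` all of whose fibers have exactly `d > 1` elements, the critical
values of `f` are contained in `π(T)`: every point `q ∉ π(T)` has at least `d`
preimages under `f` (so `q` is not a critical value of `f`). -/
theorem lattes_critical_values_subset_branch_values
    (f : Q → Q) (hf : Continuous f)
    (ftilde : Torus → Torus) (hcov : IsCoveringMap ftilde)
    (d : ℕ) (hd : 1 < d)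
    (hfib : ∀ z : Torus, (ftilde ⁻¹' {z}).ncard = d)
    (hsemi : ∀ z : Torus, piQ (ftilde z) = f (piQ z))
    (q : Q) (hq : q ∉ piQ '' torsion2) :
    ∃ s : Finset Q, (↑s : Set Q) ⊆ f ⁻¹' {q} ∧ s.card = d :=
  lattes_critical_values_subset_branch_values_general f ftilde d hd hfib hsemi q hq
end

section
/- Let f : Q → Q be a Lattès map with lift f̃ : 𝕋² → 𝕋², a covering map each of whose fibers has exactly d elements, with d > 1. Then the critical values of π are not critical points of f: for every 2-torsion point z ∈ T, there exists a neighborhood of π(z) in Q on which f is injective. -/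
open Set Filter Topology

section OddOnSymmetric

variable {G : Type*} [AddGroup G] [TopologicalSpace G] [ContinuousNeg G] [T2Space G]
  [∀ x : G, NeBot (𝓝[≠] x)]

theorem map_neg_eq_neg_of_injOn {g : G → G} (hg : Continuous g)
    (hT : {x : G | x + x = 0}.Finite) (hsign : ∀ x, g (-x) = g x ∨ g (-x) = -g x)
    {V : Set G} (hV : IsOpen V) (hVneg : ∀ x ∈ V, -x ∈ V) (hinj : V.InjOn g) :
    ∀ x ∈ V, g (-x) = -g x := by
  have hclosed : IsClosed {x | g (-x) = -g x} :=
    isClosed_eq (hg.comp continuous_neg) hg.neg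
  have hoff : V ∩ (univ \ {x | x + x = 0}) ⊆ {x | g (-x) = -g x} := by
    rintro x ⟨hxV, -, hxT⟩
    refine (hsign x).resolve_left fun h => hxT ?_
    exact neg_eq_iff_add_eq_zero.mp (hinj (hVneg x hxV) hxV h)
  have hdense : V ⊆ closure (V ∩ (univ \ {x | x + x = 0})) :=
    (dense_univ.sdiff_finite hT).open_subset_closure_inter hV
  exact fun x hx => hclosed.closure_subset_iff.mpr hoff (hdense hx)

end OddOnSymmetric

-- Makes the connected T₁ torus a perfect space.
instance : Nontrivial UnitAddCircle :=
  ⟨⟨((2⁻¹ : ℝ) : UnitAddCircle), 0, by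
    rw [Ne, AddCircle.coe_eq_zero_iff_of_mem_Ico (by norm_num)]; norm_num⟩⟩

lemma finite_torsion2 : torsion2.Finite := by
  have hT := AddCircle.finite_torsion (p := (1 : ℝ)) two_pos
  exact (hT.prod hT).subset fun x hx =>
    ⟨by simpa [two_nsmul] using congrArg Prod.fst hx, by simpa [two_nsmul] using congrArg Prod.snd hx⟩

lemma piQ_eq_iff {a b : Torus} : piQ a = piQ b ↔ a = b ∨ a = -b :=
  Quotient.eq

lemma isOpenMap_piQ : IsOpenMap piQ := by
  intro U hU
  have hsat : piQ ⁻¹' (piQ '' U) = U ∪ Neg.neg ⁻¹' U := by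
    ext x
    simp only [mem_preimage, mem_image, mem_union, piQ_eq_iff]
    constructor
    · rintro ⟨u, hu, rfl | rfl⟩
      exacts [Or.inl hu, Or.inr hu]
    · rintro (hx | hx)
      exacts [⟨x, hx, Or.inl rfl⟩, ⟨-x, hx, Or.inr rfl⟩]
  have hquot : IsQuotientMap piQ := isQuotientMap_quot_mk
  rw [← hquot.isOpen_preimage, hsat]
  exact hU.union (hU.preimage continuous_neg)

section Lift

variable {f : Q → Q} {g : Torus → Torus} (hsemi : ∀ x, piQ (g x) = f (piQ x))
include hsemi

lemma map_neg_eq_or_eq_neg_of_semiconj (x : Torus) : g (-x) = g x ∨ g (-x) = -g x := by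
  rw [← piQ_eq_iff, hsemi, hsemi]
  exact congrArg f (piQ_eq_iff.2 (Or.inr rfl))

lemma injOn_image_piQ_of_semiconj {V : Set Torus} (hVneg : ∀ x ∈ V, -x ∈ V)
    (hinj : V.InjOn g) (hodd : ∀ x ∈ V, g (-x) = -g x) : (piQ '' V).InjOn f := by
  rintro _ ⟨x₁, hx₁, rfl⟩ _ ⟨x₂, hx₂, rfl⟩ h
  rw [← hsemi, ← hsemi, piQ_eq_iff] at h
  rw [piQ_eq_iff]
  rcases h with h | h
  · exact Or.inl (hinj hx₁ hx₂ h)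
  · exact Or.inr (hinj hx₁ (hVneg x₂ hx₂) (h.trans (hodd x₂ hx₂).symm))

end Lift

theorem lattes_branch_values_not_critical_points_general
    (f : Q → Q)
    (ftilde : Torus → Torus) (hcov : IsCoveringMap ftilde)
    (hsemi : ∀ z : Torus, piQ (ftilde z) = f (piQ z))
    (z : Torus) (hz : z ∈ torsion2) :
    ∃ U ∈ nhds (piQ z), Set.InjOn f U := by
  obtain ⟨U, hUopen, hzU, hinj⟩ := hcov.isLocalHomeomorph.isLocallyInjective z
  set V := U ∩ Neg.neg ⁻¹' U
  have hVopen : IsOpen V := hUopen.inter (hUopen.preimage continuous_neg)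
  have hzV : z ∈ V := ⟨hzU, by rwa [mem_preimage, neg_eq_of_add_eq_zero_left hz]⟩
  have hVneg : ∀ x ∈ V, -x ∈ V := fun x hx => ⟨hx.2, by rw [mem_preimage, neg_neg]; exact hx.1⟩
  have hinjV : V.InjOn ftilde := hinj.mono inter_subset_left
  have hodd : ∀ x ∈ V, ftilde (-x) = -ftilde x :=
    map_neg_eq_neg_of_injOn hcov.continuous finite_torsion2
      (map_neg_eq_or_eq_neg_of_semiconj hsemi) hVopen hVneg hinjV
  exact ⟨piQ '' V, isOpenMap_piQ.image_mem_nhds (hVopen.mem_nhds hzV),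
    injOn_image_piQ_of_semiconj hsemi hVneg hinjV hodd⟩

/-- For a Lattès map `f : Q → Q` with lift a covering map
`f̃ : 𝕋² → 𝕋²` all of whose fibers have exactly `d > 1` elements, the critical
values of `π` are not critical points of `f`: for every 2-torsion point `z`,
`f` is injective on some neighborhood of `π(z)`. -/
theorem lattes_branch_values_not_critical_points
    (f : Q → Q) (hf : Continuous f)
    (ftilde : Torus → Torus) (hcov : IsCoveringMap ftilde)
    (d : ℕ) (hd : 1 < d)
    (hfib : ∀ z : Torus, (ftilde ⁻¹' {z}).ncard = d)
    (hsemi : ∀ z : Torus, piQ (ftilde z) = f (piQ z))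
    (z : Torus) (hz : z ∈ torsion2) :
    ∃ U ∈ nhds (piQ z), Set.InjOn f U :=
  lattes_branch_values_not_critical_points_general f ftilde hcov hsemi z hz
end

section
/- Let Σ = (ℤ → Bool) be the full 2-shift space with the product topology and let σ : Σ → Σ be the shift homeomorphism, σ(x)(n) = x(n+1). Let Y be the suspension (mapping torus) of σ, i.e. the quotient of Σ × [0,1] by the identification (x,1) ∼ (σ(x),0). Then Y is a continuum (nonempty, compact and connected) and Y is indecomposable: Y is not the union of two compact connected proper subsets. -/
/-- The full 2-shift space `Σ = (ℤ → Bool)` with the product topology. -/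
abbrev ShiftSpace : Type := ℤ → Bool

/-- The shift homeomorphism `σ(x)(n) = x(n+1)` (as a map). -/
def shiftMap : ShiftSpace → ShiftSpace := fun x n => x (n + 1)

/-- The gluing relation for the mapping torus of the shift: `(x,1) ∼ (σ x, 0)`. -/
def suspRel : (ShiftSpace × unitInterval) → (ShiftSpace × unitInterval) → Prop :=
  fun a b => a.2 = 1 ∧ b.2 = 0 ∧ b.1 = shiftMap a.1

/-- The suspension (mapping torus) `Y` of the shift: the quotient of
`Σ × [0,1]` by the identification `(x,1) ∼ (σ x, 0)`, with the quotient
topology. -/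
abbrev SuspShift : Type := Quot suspRel

/-!
Write `SuspShift` as the quotient of `ShiftSpace × ℝ` by `(σᵏ x, r) ∼ (x, r + k)`. The quotient
map `flow` is open and its relation is a locally finite union of closed graphs, so the suspension
is Hausdorff. The shift is topologically mixing, so by Baire's theorem every nonempty open subset of
`ShiftSpace` contains points whose forward and backward orbits are both dense; both half flow lines
through such a point are then dense in the suspension, which is therefore connected.

Let `A` be a proper closed connected subset with `flow (x, r₀)` interior to `A`, `x` as above. Both
half flow lines through `x` leave `A`, at times `a < r₀ < b`, and so do the flow lines through a
clopen cylinder `U ∋ x`. The compact tube `flow '' (U ×ˢ Icc a b)` adds to the open tube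
`flow '' (U ×ˢ Ioo a b)` only points outside `A`, so it traps `A`. Finally choose `v` agreeing with
`x` near the origin, so that `flow (v, r₀) ∈ A`, but with `v (p + k) ≠ x p` for one far coordinate
`p` and all relevant `k`; once `U` also fixes the coordinate `p`, the tube misses `flow (v, r₀)`.
-/

open Set Filter Topology

theorem exists_finset_pi_singleton_subset {ι : Type*} {π : ι → Type*}
    [∀ i, TopologicalSpace (π i)] {s : Set (∀ i, π i)} (hs : IsOpen s) {x : ∀ i, π i}
    (hx : x ∈ s) : ∃ I : Finset ι, (I : Set ι).pi (fun i => {x i}) ⊆ s := by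
  obtain ⟨I, u, hu, hIu⟩ := isOpen_pi_iff.1 hs x hx
  exact ⟨I, (pi_mono fun i hi => singleton_subset_iff.2 (hu i hi).2).trans hIu⟩

namespace SuspShift

def shiftBy (k : ℤ) (x : ShiftSpace) : ShiftSpace := fun n => x (n + k)

@[simp] lemma shiftBy_apply (k n : ℤ) (x : ShiftSpace) : shiftBy k x n = x (n + k) := rfl

@[simp] lemma shiftBy_shiftBy (j k : ℤ) (x : ShiftSpace) :
    shiftBy j (shiftBy k x) = shiftBy (j + k) x := by
  ext n; simp [add_assoc, add_comm j]

@[simp] lemma shiftBy_zero (x : ShiftSpace) : shiftBy 0 x = x := by ext n; simp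

lemma shiftMap_shiftBy (k : ℤ) (x : ShiftSpace) : shiftMap (shiftBy k x) = shiftBy (k + 1) x := by
  ext n; simp [shiftMap, add_assoc, add_comm k]

@[fun_prop] lemma continuous_shiftBy (k : ℤ) : Continuous (shiftBy k) :=
  continuous_pi fun n => continuous_apply (n + k)

lemma eq_of_mk_eq_mk {a b : ShiftSpace × unitInterval} (h : Quot.mk suspRel a = Quot.mk suspRel b)
    (ha : (a.2 : ℝ) < 1) (hb : (b.2 : ℝ) < 1) : a = b := by
  let g : ShiftSpace × unitInterval → ShiftSpace × unitInterval := fun p =>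
    if p.2 = 1 then (shiftMap p.1, 0) else p
  have hg : ∀ p p', suspRel p p' → g p = g p' := by
    rintro p ⟨x', t'⟩ ⟨hp, rfl, rfl⟩
    simp [g, hp]
  have ha' : a.2 ≠ 1 := fun h => ha.ne (congrArg Subtype.val h)
  have hb' : b.2 ≠ 1 := fun h => hb.ne (congrArg Subtype.val h)
  simpa [g, ha', hb'] using congrArg (Quot.lift g hg) h

/-- Identifies `SuspShift` with the quotient of `ShiftSpace × ℝ` by `(shiftBy k x, r) ∼ (x, r + k)`,
see `flow_eq_flow_iff`. -/
noncomputable def flow (p : ShiftSpace × ℝ) : SuspShift :=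
  Quot.mk _ (shiftBy ⌊p.2⌋ p.1, ⟨Int.fract p.2, Int.fract_nonneg _, (Int.fract_lt_one _).le⟩)

lemma flow_shiftBy (k : ℤ) (x : ShiftSpace) (r : ℝ) :
    flow (shiftBy k x, r) = flow (x, r + k) := by
  simp [flow, add_comm]

lemma flow_eq_flow_iff {x y : ShiftSpace} {r s : ℝ} :
    flow (x, r) = flow (y, s) ↔ ∃ k : ℤ, x = shiftBy k y ∧ s = r + k := by
  constructor
  · intro h
    obtain ⟨hxy, hrs⟩ := Prod.ext_iff.1 (eq_of_mk_eq_mk h (Int.fract_lt_one r) (Int.fract_lt_one s))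
    have hrs : Int.fract r = Int.fract s := congrArg Subtype.val hrs
    refine ⟨⌊s⌋ - ⌊r⌋, ?_, ?_⟩
    · simpa [neg_add_eq_sub] using congrArg (shiftBy (-⌊r⌋)) hxy
    · push_cast
      linarith [Int.floor_add_fract r, Int.floor_add_fract s]
  · rintro ⟨k, rfl, rfl⟩
    exact flow_shiftBy k y r

lemma flow_eq_mk_of_mem_Icc {k : ℤ} {r : ℝ} (hr : r ∈ Icc (k : ℝ) (k + 1)) (x : ShiftSpace) :
    flow (x, r) = Quot.mk _ (shiftBy k x, projIcc 0 1 zero_le_one (r - k)) := by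
  rcases hr.2.lt_or_eq with hlt | rfl
  · have hfloor : ⌊r⌋ = k := Int.floor_eq_iff.2 ⟨hr.1, hlt⟩
    have hk : (k : ℝ) ≤ r := hr.1
    simp only [flow, hfloor]
    congr
    rw [Int.fract, hfloor, min_eq_right (by linarith), max_eq_right (by linarith)]
  · have hsusp : suspRel (shiftBy k x, 1) (shiftBy (k + 1) x, 0) :=
      ⟨rfl, rfl, (shiftMap_shiftBy k x).symm⟩
    have hfloor : ⌊(k : ℝ) + 1⌋ = k + 1 := by exact_mod_cast Int.floor_intCast (k + 1)
    rw [add_sub_cancel_left, projIcc_right]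
    refine Eq.trans ?_ (Quot.sound hsusp).symm
    simp only [flow, hfloor]
    congr
    exact_mod_cast Int.fract_intCast (k + 1)

@[fun_prop] lemma continuous_flow : Continuous flow := by
  refine LocallyFinite.continuous (f := fun k : ℤ => univ ×ˢ Icc (k : ℝ) (k + 1)) ?_ ?_
    (fun k => isClosed_univ.prod isClosed_Icc) fun k => ?_
  · exact (locallyFinite_Icc_of_tendsto tendsto_intCast_atTop_atTop
      (tendsto_atBot_add_const_right _ _ (tendsto_intCast_atBot_iff.2 tendsto_id))).prod_left _
  · exact eq_univ_of_forall fun p => mem_iUnion.2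
      ⟨⌊p.2⌋, trivial, Int.floor_le _, (Int.lt_floor_add_one _).le⟩
  · exact (continuous_quot_mk.comp (by fun_prop)).continuousOn.congr
      fun p hp => flow_eq_mk_of_mem_Icc hp.2 p.1

lemma mk_eq_flow (x : ShiftSpace) (t : unitInterval) : Quot.mk suspRel (x, t) = flow (x, t) := by
  rw [flow_eq_mk_of_mem_Icc (k := 0) (by simp)]
  simp

lemma surjective_flow : Function.Surjective flow := by
  intro y
  induction y using Quot.ind with
  | mk p => exact ⟨(p.1, p.2), (mk_eq_flow p.1 p.2).symm⟩

lemma isOpenMap_flow : IsOpenMap flow := by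
  intro O hO
  rw [← isQuotientMap_quot_mk.isOpen_preimage]
  have hpre : Quot.mk suspRel ⁻¹' (flow '' O) = ⋃ k : ℤ,
      (fun p : ShiftSpace × unitInterval => (shiftBy k p.1, (p.2 : ℝ) - k)) ⁻¹' O := by
    ext ⟨x, t⟩
    simp only [mem_preimage, mk_eq_flow, mem_image, mem_iUnion, Prod.exists]
    constructor
    · rintro ⟨y, s, hys, h⟩
      obtain ⟨k, rfl, hk⟩ := flow_eq_flow_iff.1 h
      exact ⟨k, by rwa [hk, add_sub_cancel_right]⟩
    · rintro ⟨k, hk⟩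
      exact ⟨_, _, hk, by rw [flow_shiftBy, sub_add_cancel]⟩
  rw [hpre]
  exact isOpen_iUnion fun k => hO.preimage (by fun_prop)

instance : T2Space SuspShift := by
  rw [t2Space_iff_of_isOpenQuotientMap ⟨surjective_flow, continuous_flow, isOpenMap_flow⟩]
  have hrel : {q : (ShiftSpace × ℝ) × (ShiftSpace × ℝ) | flow q.1 = flow q.2} =
      ⋃ k : ℤ, {q | q.1.1 = shiftBy k q.2.1 ∧ q.2.2 = q.1.2 + (k : ℝ)} := by
    ext ⟨⟨x, r⟩, ⟨y, s⟩⟩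
    simp [flow_eq_flow_iff]
  rw [hrel]
  -- only the graphs with `k` near `s - r` meet a neighbourhood of `((x, r), (y, s))`
  refine LocallyFinite.isClosed_iUnion ?_ fun k =>
    (isClosed_eq (by fun_prop) (by fun_prop)).inter (isClosed_eq (by fun_prop) (by fun_prop))
  refine ((locallyFinite_Icc_of_tendsto (f := fun k : ℤ => (k : ℝ)) (g := fun k : ℤ => (k : ℝ))
    tendsto_intCast_atTop_atTop (tendsto_intCast_atBot_iff.2 tendsto_id)).preimage_continuous
    (g := fun q : (ShiftSpace × ℝ) × (ShiftSpace × ℝ) => q.2.2 - q.1.2) (by fun_prop)).subset ?_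
  rintro k q ⟨-, hq⟩
  simp [hq]

lemma eventually_inter_preimage_shiftBy_nonempty {U V : Set ShiftSpace} (hU : IsOpen U)
    (hU' : U.Nonempty) (hV : IsOpen V) (hV' : V.Nonempty) :
    ∀ᶠ k in cofinite, (U ∩ shiftBy k ⁻¹' V).Nonempty := by
  obtain ⟨y, hy⟩ := hU'
  obtain ⟨z, hz⟩ := hV'
  obtain ⟨I, hI⟩ := exists_finset_pi_singleton_subset hU hy
  obtain ⟨J, hJ⟩ := exists_finset_pi_singleton_subset hV hz
  refine (I.finite_toSet.image2 (· - ·) J.finite_toSet).subset fun k hk => ?_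
  by_contra hkIJ
  refine hk ⟨fun n => if n ∈ I then y n else z (n - k), hI fun n hn => if_pos hn,
    hJ fun n hn => ?_⟩
  have hnk : n + k ∉ I := fun h => hkIJ ⟨n + k, h, n, hn, by ring⟩
  simp [hnk]

def FrequentlyVisits (l : Filter ℤ) (x : ShiftSpace) : Prop :=
  ∀ U : Set ShiftSpace, IsOpen U → U.Nonempty → ∃ᶠ k in l, shiftBy k x ∈ U

lemma setOf_frequentlyVisits_mem_residual (l : Filter ℤ) [l.IsCountablyGenerated] [l.NeBot]
    (hl : l ≤ cofinite) : {x | FrequentlyVisits l x} ∈ residual ShiftSpace := by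
  obtain ⟨B, hBc, hBe, hB⟩ := TopologicalSpace.exists_countable_basis ShiftSpace
  obtain ⟨s, hs⟩ := l.exists_antitone_basis
  have hvisit : ∀ U ∈ B, ∀ n, ⋃ k ∈ s n, shiftBy k ⁻¹' U ∈ residual ShiftSpace := by
    intro U hU n
    refine residual_of_dense_open (isOpen_biUnion fun k _ => (hB.isOpen hU).preimage
      (continuous_shiftBy k)) (dense_iff_inter_open.2 fun O hO hO' => ?_)
    obtain ⟨k, ⟨x, hxO, hxU⟩, hk⟩ := (((eventually_inter_preimage_shiftBy_nonempty hO hO'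
      (hB.isOpen hU) (nonempty_iff_ne_empty.2 fun h => hBe (h ▸ hU))).filter_mono hl).and
      (hs.mem n)).exists
    exact ⟨x, hxO, mem_biUnion hk hxU⟩
  filter_upwards [(countable_bInter_mem hBc).2 fun U hU => countable_iInter_mem.2 (hvisit U hU)]
    with x hx U hU ⟨u, hu⟩
  obtain ⟨V, hVB, huV, hVU⟩ := hB.exists_subset_of_mem_open hu hU
  refine hs.frequently_iff.2 fun n _ => ?_
  obtain ⟨k, hk, hkV⟩ := mem_iUnion₂.1 (mem_iInter.1 (mem_iInter₂.1 hx V hVB) n)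
  exact ⟨k, hk, hVU hkV⟩

lemma exists_frequentlyVisits_atTop_atBot {U : Set ShiftSpace} (hU : IsOpen U)
    (hne : U.Nonempty) : ∃ x ∈ U, FrequentlyVisits atTop x ∧ FrequentlyVisits atBot x :=
  (dense_of_mem_residual (inter_mem (setOf_frequentlyVisits_mem_residual atTop atTop_le_cofinite)
    (setOf_frequentlyVisits_mem_residual atBot atBot_le_cofinite))).inter_open_nonempty U hU hne

lemma dense_flow_image {l : Filter ℤ} {x : ShiftSpace} (hx : FrequentlyVisits l x) {S : Set ℝ}
    (hS : ∀ s : ℝ, ∀ᶠ k : ℤ in l, s + k ∈ S) : Dense ((fun r => flow (x, r)) '' S) := by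
  refine dense_iff_inter_open.2 fun O hO ⟨o, ho⟩ => ?_
  obtain ⟨⟨y, s⟩, rfl⟩ := surjective_flow o
  obtain ⟨k, hkO, hkS⟩ := ((hx _ (hO.preimage (by fun_prop : Continuous fun v => flow (v, s)))
    ⟨y, ho⟩).and_eventually (hS s)).exists
  exact ⟨flow (x, s + k), by rwa [← flow_shiftBy], s + k, hkS, rfl⟩

instance : ConnectedSpace SuspShift := by
  obtain ⟨x, -, hx, -⟩ := exists_frequentlyVisits_atTop_atBot isOpen_univ univ_nonempty
  have hd : DenseRange fun r => flow (x, r) := by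
    simpa [DenseRange] using dense_flow_image hx (S := univ) fun s => univ_mem' fun _ => trivial
  have := hd.preconnectedSpace (by fun_prop)
  exact ⟨⟨flow (x, 0)⟩⟩

lemma exists_flow_notMem {A : Set SuspShift} (hA : IsClosed A) (hA' : A ≠ univ) {l : Filter ℤ}
    {x : ShiftSpace} (hx : FrequentlyVisits l x) {S : Set ℝ}
    (hS : ∀ s : ℝ, ∀ᶠ k : ℤ in l, s + k ∈ S) : ∃ r ∈ S, flow (x, r) ∉ A := by
  by_contra! h
  exact hA' (eq_univ_of_univ_subset ((dense_flow_image hx hS).closure_eq ▸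
    closure_minimal (image_subset_iff.2 h) hA))

lemma exists_eqOn_and_shiftBy_apply_ne (x : ShiftSpace) (V : Finset ℤ) (c : ℝ) :
    ∃ v : ShiftSpace, EqOn v x V ∧ ∃ p : ℤ, ∀ k : ℤ, c ≤ k → shiftBy k v p ≠ x p := by
  obtain ⟨M, hM⟩ := V.bddAbove
  refine ⟨fun n => if n ∈ V then x n else !x (M + 1 - ⌈c⌉), fun n hn => if_pos hn,
    M + 1 - ⌈c⌉, fun k hk => ?_⟩
  have hkV : M + 1 - ⌈c⌉ + k ∉ V := fun h => by
    have := hM (Finset.mem_coe.2 h)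
    have := Int.ceil_le.2 hk
    omega
  simp [hkV]

lemma subset_flow_image_Icc_of_isPreconnected {A : Set SuspShift} (hA : IsPreconnected A)
    {U : Set ShiftSpace} (hU : IsClopen U) {a b : ℝ} (ha : ∀ u ∈ U, flow (u, a) ∉ A)
    (hb : ∀ u ∈ U, flow (u, b) ∉ A) (hne : (A ∩ flow '' (U ×ˢ Ioo a b)).Nonempty) :
    A ⊆ flow '' (U ×ˢ Icc a b) := by
  have hclosed : IsClosed (flow '' (U ×ˢ Icc a b)) :=
    ((hU.isClosed.isCompact.prod isCompact_Icc).image continuous_flow).isClosed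
  have hsub : flow '' (U ×ˢ Ioo a b) ⊆ flow '' (U ×ˢ Icc a b) :=
    image_mono (prod_mono le_rfl Ioo_subset_Icc_self)
  refine (hA.subset_of_closure_inter_subset (isOpenMap_flow _ (hU.isOpen.prod isOpen_Ioo)) hne
    ?_).trans hsub
  rintro _ ⟨hcl, hyA⟩
  obtain ⟨⟨u, s⟩, ⟨hu, hs⟩, rfl⟩ := closure_minimal hsub hclosed hcl
  refine ⟨(u, s), ⟨hu, lt_of_le_of_ne hs.1 ?_, lt_of_le_of_ne hs.2 ?_⟩, rfl⟩
  · rintro rfl; exact ha u hu hyA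
  · rintro rfl; exact hb u hu hyA

theorem eq_univ_of_isPreconnected_of_interior_nonempty {A : Set SuspShift} (hAcl : IsClosed A)
    (hA : IsPreconnected A) (hint : (interior A).Nonempty) : A = univ := by
  by_contra hA'
  obtain ⟨o, ho⟩ := hint
  obtain ⟨⟨y, r₀⟩, rfl⟩ := surjective_flow o
  have hP : IsOpen {v | flow (v, r₀) ∈ interior A} := isOpen_interior.preimage (by fun_prop)
  obtain ⟨x, hxP, hfwd, hbwd⟩ := exists_frequentlyVisits_atTop_atBot hP ⟨y, ho⟩
  have hx : flow (x, r₀) ∈ A := interior_subset hxP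
  obtain ⟨b, hb, hbA⟩ := exists_flow_notMem hAcl hA' hfwd (S := Ici r₀) fun s =>
    tendsto_atTop.1 (tendsto_atTop_add_const_left _ s tendsto_intCast_atTop_atTop) r₀
  obtain ⟨a, ha, haA⟩ := exists_flow_notMem hAcl hA' hbwd (S := Iic r₀) fun s =>
    tendsto_atBot.1
      (tendsto_atBot_add_const_left _ s (tendsto_intCast_atBot_iff.2 tendsto_id)) r₀
  have hab : IsOpen {u | flow (u, a) ∉ A ∧ flow (u, b) ∉ A} :=
    (hAcl.isOpen_compl.preimage (by fun_prop)).inter (hAcl.isOpen_compl.preimage (by fun_prop))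
  obtain ⟨V₀, hV₀⟩ := exists_finset_pi_singleton_subset hP hxP
  obtain ⟨V, hV⟩ := exists_finset_pi_singleton_subset hab ⟨haA, hbA⟩
  -- `flow (v, r₀) ∈ A`, while coordinate `p` keeps each `shiftBy k v`, `r₀ - k ≤ b`, out of `U`
  obtain ⟨v, hv, p, hp⟩ := exists_eqOn_and_shiftBy_apply_ne x V₀ (r₀ - b)
  set U := ((insert p V : Finset ℤ) : Set ℤ).pi fun n => {x n}
  have hUV : U ⊆ (V : Set ℤ).pi fun n => {x n} := pi_mono' (fun _ _ => le_rfl) (by simp)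
  have htrap : A ⊆ flow '' (U ×ˢ Icc a b) := subset_flow_image_Icc_of_isPreconnected hA
    ⟨isClosed_set_pi fun _ _ => isClosed_singleton,
      isOpen_set_pi (Finset.finite_toSet _) fun _ _ => isOpen_discrete _⟩
    (fun u hu => (hV (hUV hu)).1) (fun u hu => (hV (hUV hu)).2)
    ⟨flow (x, r₀), hx, (x, r₀), ⟨fun _ _ => rfl, lt_of_le_of_ne ha fun h => haA (h ▸ hx),
      lt_of_le_of_ne hb fun h => hbA (h ▸ hx)⟩, rfl⟩
  obtain ⟨⟨u, s⟩, ⟨hu, hs⟩, hus⟩ := htrap (interior_subset (hV₀ hv))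
  obtain ⟨k, rfl, rfl⟩ := flow_eq_flow_iff.1 hus
  exact hp k (by linarith [hs.2]) (hu p (Finset.mem_insert_self p V))

end SuspShift

/-- The suspension `Y` of the full 2-shift is a continuum
(nonempty, compact and connected) and is indecomposable: it is not the union of
two compact connected proper subsets. -/
theorem suspension_of_two_shift_is_indecomposable_continuum :
    Nonempty SuspShift ∧ CompactSpace SuspShift ∧ ConnectedSpace SuspShift ∧
    ¬ ∃ A B : Set SuspShift,
        IsCompact A ∧ IsConnected A ∧ A ≠ Set.univ ∧
        IsCompact B ∧ IsConnected B ∧ B ≠ Set.univ ∧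
        A ∪ B = Set.univ := by
  refine ⟨inferInstance, inferInstance, inferInstance, ?_⟩
  rintro ⟨A, B, hA, hAconn, hAne, hB, -, hBne, hAB⟩
  have hBA : Bᶜ ⊆ A := fun y hy => (hAB ▸ mem_univ y : y ∈ A ∪ B).resolve_right hy
  have hint : (interior A).Nonempty :=
    (nonempty_compl.2 hBne).mono (interior_maximal hBA hB.isClosed.isOpen_compl)
  exact hAne (SuspShift.eq_univ_of_isPreconnected_of_interior_nonempty hA.isClosed
    hAconn.isPreconnected hint)
end
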